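/- arXiv:2412.10692 — 2 statements merged into one kernel-verified Lean document; each statement's English description precedes it below -/
import Mathlib

section
/- Let π* ∈ ℝ, σ > 0, a < b, and define Z(m) = Φ((b - π*)·σ·m^{-1/2}) - Φ((a - π*)·σ·m^{-1/2}) for m > 0, where Φ is the standard normal CDF. Then as m → 0⁺, m·ln Z(m) converges to 0 if a ≤ π* ≤ b (with π* in the open interval suffices for value 0), to -(σ²/2)(a - π*)² if π* < a, and to -(σ²/2)(b - π*)² if π* > b. -/
open Real MeasureTheory Set Filter

/-- Standard normal probability density function. -/
noncomputable def stdPhi (x : ℝ) : ℝ := (Real.sqrt (2 * π))⁻¹ * Real.exp (-x ^ 2 / 2)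

/-- Standard normal cumulative distribution function. -/
noncomputable def stdCDF (y : ℝ) : ℝ := ∫ x in Iic y, stdPhi x

/-!
With `t = m^{-1/2}` and `c < d`, the quantity `Z = Φ(d t) - Φ(c t)` is the Gaussian mass of
`[c t, d t]`. If `0 < c`, the density on that interval is at most `φ(c t)` and, on its first unit
subinterval, at least `φ(c t + 1)`; since `m log φ(y t) = -y²/2 + O(m)`, both bounds give
`m log Z → -c²/2` (the length factor `(d - c) t` only costs `m log m → 0`). If `c < 0 < d`,
`Z` eventually lies between the fixed mass `Φ(1) - Φ(0)` and `1`, so `m log Z → 0`. The case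
`π* > b` is the case `π* < a` reflected through the symmetry of `φ`.
-/

open Topology

lemma stdPhi_pos (x : ℝ) : 0 < stdPhi x := by
  unfold stdPhi
  positivity

lemma stdPhi_neg (x : ℝ) : stdPhi (-x) = stdPhi x := by
  simp only [stdPhi, neg_sq]

lemma log_stdPhi (x : ℝ) : log (stdPhi x) = -log (√(2 * π)) - x ^ 2 / 2 := by
  rw [stdPhi, log_mul (by positivity) (exp_pos _).ne', log_inv, log_exp]
  ring

lemma stdPhi_antitoneOn : AntitoneOn stdPhi (Ici 0) := by
  intro x hx y _ hxy
  unfold stdPhi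
  gcongr

lemma integrable_stdPhi : Integrable stdPhi := by
  have h := (integrable_exp_neg_mul_sq (b := 2⁻¹) (by norm_num)).const_mul (√(2 * π))⁻¹
  refine h.congr (ae_of_all _ fun x => ?_)
  simp only [stdPhi]
  ring_nf

lemma integral_stdPhi : ∫ x, stdPhi x = 1 := by
  simp_rw [stdPhi, integral_const_mul, neg_div, div_eq_inv_mul _ (2 : ℝ), ← neg_mul,
    integral_gaussian, div_inv_eq_mul, mul_comm π 2]
  exact inv_mul_cancel₀ (by positivity)

lemma stdCDF_sub_stdCDF (y₁ y₂ : ℝ) : stdCDF y₂ - stdCDF y₁ = ∫ x in y₁..y₂, stdPhi x :=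
  intervalIntegral.integral_Iic_sub_Iic integrable_stdPhi.integrableOn
    integrable_stdPhi.integrableOn

lemma stdCDF_sub_stdCDF_neg (y₁ y₂ : ℝ) :
    stdCDF y₂ - stdCDF y₁ = stdCDF (-y₁) - stdCDF (-y₂) := by
  simp_rw [stdCDF_sub_stdCDF, ← intervalIntegral.integral_comp_neg stdPhi, stdPhi_neg]

lemma stdCDF_nonneg (y : ℝ) : 0 ≤ stdCDF y :=
  setIntegral_nonneg measurableSet_Iic fun x _ => (stdPhi_pos x).le

lemma stdCDF_le_one (y : ℝ) : stdCDF y ≤ 1 :=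
  integral_stdPhi ▸ setIntegral_le_integral integrable_stdPhi
    (ae_of_all _ fun x => (stdPhi_pos x).le)

lemma stdCDF_mono : Monotone stdCDF := fun _ _ h =>
  setIntegral_mono_set integrable_stdPhi.integrableOn (ae_of_all _ fun x => (stdPhi_pos x).le)
    (Iic_subset_Iic.2 h).eventuallyLE

section Bounds

variable {y₁ y₂ : ℝ}

lemma mul_stdPhi_le_stdCDF_sub (h₀ : 0 ≤ y₁) (h : y₁ ≤ y₂) :
    (y₂ - y₁) * stdPhi y₂ ≤ stdCDF y₂ - stdCDF y₁ := by
  rw [stdCDF_sub_stdCDF, ← smul_eq_mul, ← intervalIntegral.integral_const]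
  refine intervalIntegral.integral_mono_on h intervalIntegrable_const
    integrable_stdPhi.intervalIntegrable fun x hx => ?_
  exact stdPhi_antitoneOn (h₀.trans hx.1) (h₀.trans h) hx.2

lemma stdCDF_sub_le_mul_stdPhi (h₀ : 0 ≤ y₁) (h : y₁ ≤ y₂) :
    stdCDF y₂ - stdCDF y₁ ≤ (y₂ - y₁) * stdPhi y₁ := by
  rw [stdCDF_sub_stdCDF, ← smul_eq_mul, ← intervalIntegral.integral_const]
  refine intervalIntegral.integral_mono_on h integrable_stdPhi.intervalIntegrable
    intervalIntegrable_const fun x hx => ?_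
  exact stdPhi_antitoneOn h₀ (h₀.trans hx.1) hx.1

end Bounds

lemma tendsto_inv_sqrt_nhdsGT_zero : Tendsto (fun m : ℝ => (√m)⁻¹) (𝓝[>] 0) atTop := by
  refine tendsto_inv_nhdsGT_zero.comp (tendsto_nhdsWithin_iff.2 ⟨?_, ?_⟩)
  · simpa using (continuous_sqrt.tendsto 0).mono_left nhdsWithin_le_nhds
  · filter_upwards [self_mem_nhdsWithin] with m hm using sqrt_pos.2 hm

lemma tendsto_mul_log_of_le_of_le {f g h : ℝ → ℝ} {L : ℝ}
    (hf : Tendsto (fun m => m * log (f m)) (𝓝[>] 0) (𝓝 L))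
    (hh : Tendsto (fun m => m * log (h m)) (𝓝[>] 0) (𝓝 L))
    (hf_pos : ∀ᶠ m in 𝓝[>] 0, 0 < f m) (hfg : ∀ᶠ m in 𝓝[>] 0, f m ≤ g m)
    (hgh : ∀ᶠ m in 𝓝[>] 0, g m ≤ h m) :
    Tendsto (fun m => m * log (g m)) (𝓝[>] 0) (𝓝 L) := by
  refine tendsto_of_tendsto_of_tendsto_of_le_of_le' hf hh ?_ ?_ <;>
    filter_upwards [self_mem_nhdsWithin, hf_pos, hfg, hgh] with m hm hf hfg hgh
  · exact mul_le_mul_of_nonneg_left (log_le_log hf hfg) (le_of_lt hm)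
  · exact mul_le_mul_of_nonneg_left (log_le_log (hf.trans_le hfg) hgh) (le_of_lt hm)

lemma tendsto_mul_log_const_nhdsGT_zero (K : ℝ) :
    Tendsto (fun m : ℝ => m * log K) (𝓝[>] 0) (𝓝 0) := by
  simpa using ((continuous_mul_const (log K)).tendsto 0).mono_left nhdsWithin_le_nhds

lemma tendsto_mul_log_stdCDF_sub_of_neg_of_pos {c d : ℝ} (hc : c < 0) (hd : 0 < d) :
    Tendsto (fun m => m * log (stdCDF (d * (√m)⁻¹) - stdCDF (c * (√m)⁻¹))) (𝓝[>] 0) (𝓝 0) := by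
  have hmass : 0 < stdCDF 1 - stdCDF 0 :=
    (stdPhi_pos 1).trans_le (by simpa using mul_stdPhi_le_stdCDF_sub le_rfl zero_le_one)
  refine tendsto_mul_log_of_le_of_le (tendsto_mul_log_const_nhdsGT_zero _)
    (tendsto_mul_log_const_nhdsGT_zero 1) (.of_forall fun _ => hmass) ?_
    (.of_forall fun m => by linarith [stdCDF_le_one (d * (√m)⁻¹), stdCDF_nonneg (c * (√m)⁻¹)])
  filter_upwards [tendsto_inv_sqrt_nhdsGT_zero.eventually_ge_atTop 0,
    (tendsto_inv_sqrt_nhdsGT_zero.const_mul_atTop hd).eventually_ge_atTop 1] with m ht hdt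
  exact sub_le_sub (stdCDF_mono hdt) (stdCDF_mono (mul_nonpos_of_nonpos_of_nonneg hc.le ht))

lemma tendsto_mul_log_stdCDF_sub_of_pos {c d : ℝ} (hc : 0 < c) (hcd : c < d) :
    Tendsto (fun m => m * log (stdCDF (d * (√m)⁻¹) - stdCDF (c * (√m)⁻¹))) (𝓝[>] 0)
      (𝓝 (-(c ^ 2 / 2))) := by
  have hlower : Tendsto (fun m => m * log (stdPhi (c * (√m)⁻¹ + 1))) (𝓝[>] 0)
      (𝓝 (-(c ^ 2 / 2))) := by
    have hcont : Continuous fun m => -m * log √(2 * π) - (c + √m) ^ 2 / 2 := by fun_prop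
    refine ((hcont.tendsto' 0 _ (by simp)).mono_left nhdsWithin_le_nhds).congr' ?_
    filter_upwards [self_mem_nhdsWithin] with m (hm : 0 < m)
    obtain ⟨s, hs, rfl⟩ : ∃ s > 0, s ^ 2 = m := ⟨√m, sqrt_pos.2 hm, sq_sqrt hm.le⟩
    rw [log_stdPhi, sqrt_sq hs.le]
    field_simp
  have hupper : Tendsto (fun m => m * log ((d * (√m)⁻¹ - c * (√m)⁻¹) * stdPhi (c * (√m)⁻¹)))
      (𝓝[>] 0) (𝓝 (-(c ^ 2 / 2))) := by
    have hcont : Continuous fun m =>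
        m * log (d - c) - m * log m / 2 - m * log √(2 * π) - c ^ 2 / 2 := by
      fun_prop
    refine ((hcont.tendsto' 0 _ (by simp)).mono_left nhdsWithin_le_nhds).congr' ?_
    filter_upwards [self_mem_nhdsWithin] with m (hm : 0 < m)
    obtain ⟨s, hs, rfl⟩ : ∃ s > 0, s ^ 2 = m := ⟨√m, sqrt_pos.2 hm, sq_sqrt hm.le⟩
    rw [sqrt_sq hs.le, ← sub_mul, log_mul (by positivity) (stdPhi_pos _).ne',
      log_mul (sub_pos.2 hcd).ne' (inv_pos.2 hs).ne', log_inv, log_pow, log_stdPhi]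
    field_simp
    ring
  refine tendsto_mul_log_of_le_of_le hlower hupper (.of_forall fun _ => stdPhi_pos _) ?_ ?_
  · filter_upwards [tendsto_inv_sqrt_nhdsGT_zero.eventually_ge_atTop 0,
      (tendsto_inv_sqrt_nhdsGT_zero.const_mul_atTop (sub_pos.2 hcd)).eventually_ge_atTop 1]
      with m ht hgap
    have hct : 0 ≤ c * (√m)⁻¹ := mul_nonneg hc.le ht
    calc stdPhi (c * (√m)⁻¹ + 1)
        = (c * (√m)⁻¹ + 1 - c * (√m)⁻¹) * stdPhi (c * (√m)⁻¹ + 1) := by ring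
      _ ≤ stdCDF (c * (√m)⁻¹ + 1) - stdCDF (c * (√m)⁻¹) :=
        mul_stdPhi_le_stdCDF_sub hct (by linarith)
      _ ≤ stdCDF (d * (√m)⁻¹) - stdCDF (c * (√m)⁻¹) :=
        sub_le_sub_right (stdCDF_mono (by linarith)) _
  · filter_upwards [tendsto_inv_sqrt_nhdsGT_zero.eventually_ge_atTop 0] with m ht
    exact stdCDF_sub_le_mul_stdPhi (mul_nonneg hc.le ht) (by gcongr)

/-- Limits of `m ↦ m ln Z(m)` as `m → 0⁺`, where
`Z(m) = Φ((b - π*) σ m^{-1/2}) - Φ((a - π*) σ m^{-1/2})`. -/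
theorem limit_m_log_Z (piM σ a b : ℝ) (hσ : 0 < σ) (hab : a < b)
    (Z : ℝ → ℝ)
    (hZ : ∀ m, Z m =
      stdCDF ((b - piM) * σ * (Real.sqrt m)⁻¹) - stdCDF ((a - piM) * σ * (Real.sqrt m)⁻¹)) :
    (a < piM → piM < b →
      Tendsto (fun m => m * Real.log (Z m)) (nhdsWithin 0 (Ioi 0)) (nhds 0)) ∧
    (piM < a →
      Tendsto (fun m => m * Real.log (Z m)) (nhdsWithin 0 (Ioi 0))
        (nhds (-(σ ^ 2 / 2 * (a - piM) ^ 2)))) ∧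
    (piM > b →
      Tendsto (fun m => m * Real.log (Z m)) (nhdsWithin 0 (Ioi 0))
        (nhds (-(σ ^ 2 / 2 * (b - piM) ^ 2)))) := by
  simp_rw [funext hZ]
  refine ⟨fun ha hb => ?_, fun ha => ?_, fun hb => ?_⟩
  · exact tendsto_mul_log_stdCDF_sub_of_neg_of_pos (by nlinarith) (by nlinarith)
  · convert tendsto_mul_log_stdCDF_sub_of_pos (c := (a - piM) * σ) (d := (b - piM) * σ)
      (by nlinarith) (by nlinarith) using 2
    ring
  · simp_rw [stdCDF_sub_stdCDF_neg ((a - piM) * σ * _), ← neg_mul, neg_sub]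
    convert tendsto_mul_log_stdCDF_sub_of_pos (c := (piM - b) * σ) (d := (piM - a) * σ)
      (by nlinarith) (by nlinarith) using 2
    ring
end

section
/- The function v(t,x) = ln x + (r + (μ-r)²/(2σ²))(T-t) + (m/2)·ln(2π e m/σ²)·(T-t) solves the exploratory HJB equation v_t + r x v_x - ((μ-r)² v_x²)/(2σ² v_{xx}) + (m/2)·ln(-2π e m/(σ² x² v_{xx})) = 0 on [0,T) × (0,∞) with terminal condition v(T,x) = ln x. -/
open Real Set

/-
For `v t x = log x + c (T - t)` one has `v_t = -c`, `v_x = 1/x` and `v_xx = -1/x²`. The factors of `x`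
cancel in every term of the Hamiltonian, which collapses to the constant
`r + (μ - r)²/(2σ²) + (m/2) log(2π e m/σ²)`; this is exactly the rate `c` at which `v` decreases in `t`.
-/

namespace LogUtility

lemma deriv_log_add_const (a : ℝ) : deriv (fun y => log y + a) = fun y => y⁻¹ := by
  funext y
  rw [deriv_add_const, Real.deriv_log]

lemma deriv_const_mul_sub_add_const (c T b t : ℝ) : deriv (fun s => c * (T - s) + b) t = -c := by
  have h : HasDerivAt (fun s => c * (T - s) + b) (c * (0 - 1)) t :=
    (((hasDerivAt_const t T).sub (hasDerivAt_id t)).const_mul c).add_const b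
  rw [h.deriv]
  ring

lemma mul_sq_mul_neg_inv_sq (a : ℝ) {x : ℝ} (hx : x ≠ 0) : a * x ^ 2 * -(x ^ 2)⁻¹ = -a := by
  field_simp

lemma mul_inv_sq_div_mul_neg_inv_sq (a b : ℝ) {x : ℝ} (hx : x ≠ 0) :
    a * (x⁻¹) ^ 2 / (b * -(x ^ 2)⁻¹) = -(a / b) := by
  rw [inv_pow, mul_neg, div_neg, mul_div_mul_right _ _ (inv_ne_zero (pow_ne_zero 2 hx))]

end LogUtility

theorem log_utility_exploratory_HJB_general (r mu σ m T : ℝ)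
    (v : ℝ → ℝ → ℝ)
    (hv : ∀ t x, v t x = Real.log x + (r + (mu - r) ^ 2 / (2 * σ ^ 2)) * (T - t)
        + (m / 2) * Real.log (2 * π * Real.exp 1 * m / σ ^ 2) * (T - t)) :
    (∀ t ∈ Ico (0 : ℝ) T, ∀ x : ℝ, 0 < x →
      deriv (fun s => v s x) t + r * x * deriv (fun y => v t y) x
        - (mu - r) ^ 2 * (deriv (fun y => v t y) x) ^ 2 /
            (2 * σ ^ 2 * deriv (deriv (fun y => v t y)) x)
        + (m / 2) * Real.log (-(2 * π * Real.exp 1 * m) /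
            (σ ^ 2 * x ^ 2 * deriv (deriv (fun y => v t y)) x)) = 0) ∧
      (∀ x : ℝ, 0 < x → v T x = Real.log x) := by
  set c := r + (mu - r) ^ 2 / (2 * σ ^ 2) + (m / 2) * Real.log (2 * π * Real.exp 1 * m / σ ^ 2)
  have hv_space : ∀ t, (fun y => v t y) = fun y => log y + c * (T - t) := fun t => by
    funext y; rw [hv]; ring
  have hv_time : ∀ x, (fun s => v s x) = fun s => c * (T - s) + log x := fun x => by
    funext s; rw [hv]; ring
  refine ⟨fun t _ x hx => ?_, fun x _ => by rw [hv]; ring⟩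
  rw [hv_time, LogUtility.deriv_const_mul_sub_add_const, hv_space, LogUtility.deriv_log_add_const,
    deriv_inv, mul_inv_cancel_right₀ hx.ne', LogUtility.mul_inv_sq_div_mul_neg_inv_sq _ _ hx.ne',
    LogUtility.mul_sq_mul_neg_inv_sq _ hx.ne', neg_div_neg_eq]
  ring

/-- The explicit function solves the exploratory HJB equation for logarithmic utility. -/
theorem log_utility_exploratory_HJB (r mu σ m T : ℝ)
    (hσ : 0 < σ) (hm : 0 < m) (hT : 0 < T)
    (v : ℝ → ℝ → ℝ)
    (hv : ∀ t x, v t x = Real.log x + (r + (mu - r) ^ 2 / (2 * σ ^ 2)) * (T - t)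
        + (m / 2) * Real.log (2 * π * Real.exp 1 * m / σ ^ 2) * (T - t)) :
    (∀ t ∈ Ico (0 : ℝ) T, ∀ x : ℝ, 0 < x →
      deriv (fun s => v s x) t + r * x * deriv (fun y => v t y) x
        - (mu - r) ^ 2 * (deriv (fun y => v t y) x) ^ 2 /
            (2 * σ ^ 2 * deriv (deriv (fun y => v t y)) x)
        + (m / 2) * Real.log (-(2 * π * Real.exp 1 * m) /
            (σ ^ 2 * x ^ 2 * deriv (deriv (fun y => v t y)) x)) = 0) ∧
      (∀ x : ℝ, 0 < x → v T x = Real.log x) :=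
  log_utility_exploratory_HJB_general r mu σ m T v hv
end
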